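/- Equivalence of t-approval WCCAV and weighted multicover: given a weighted t-approval election (C,V), unregistered voters W = (w_1,…,w_n) all approving p, define for each c ∈ C \ {p} the covering requirement r_c = max(0, score_{(C,V)}(c) − score_{(C,V)}(p)), and for each w_i the set S_{w_i} of candidates w_i does not approve, with weight ω(w_i). Then for any I ⊆ {1,…,n}: adding the voters {w_i : i ∈ I} to (C,V) makes p a winner if and only if for every c ∈ C \ {p}, Σ_{i ∈ I, c ∈ S_{w_i}} ω(w_i) ≥ r_c. -/

import Mathlib

/-- Approval score: total weight of voters approving candidate `c`; each voter is a pair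
(weight, approval set). -/
def appScore {C : Type*} [DecidableEq C] (M : Multiset (ℕ × Finset C)) (c : C) : ℕ :=
  (M.map (fun v => if c ∈ v.2 then v.1 else 0)).sum

section

variable {C ι : Type*} [DecidableEq C]

theorem appScore_add (M N : Multiset (ℕ × Finset C)) (c : C) :
    appScore (M + N) c = appScore M c + appScore N c := by
  simp only [appScore, Multiset.map_add, Multiset.sum_add]

theorem appScore_map (w : ι → ℕ × Finset C) (I : Finset ι) (c : C) :
    appScore (I.val.map w) c = ∑ i ∈ I.filter (fun i => c ∈ (w i).2), (w i).1 := by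
  rw [appScore, Multiset.map_map, Finset.sum_filter]
  rfl

theorem appScore_map_of_forall_mem {w : ι → ℕ × Finset C} {I : Finset ι} {p : C}
    (hp : ∀ i ∈ I, p ∈ (w i).2) :
    appScore (I.val.map w) p = ∑ i ∈ I, (w i).1 := by
  rw [appScore_map, Finset.filter_true_of_mem hp]

/-- Adding voters who all approve `p` lets `c` keep its lead over `p` only through the voters
that approve `c` too, so `c` is caught up exactly by the weight of those that do not. -/
theorem appScore_add_le_iff {w : ι → ℕ × Finset C} {I : Finset ι} {p : C}
    (hp : ∀ i ∈ I, p ∈ (w i).2) (V : Multiset (ℕ × Finset C)) (c : C) :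
    appScore (V + I.val.map w) c ≤ appScore (V + I.val.map w) p ↔
      appScore V c - appScore V p ≤ ∑ i ∈ I.filter (fun i => c ∉ (w i).2), (w i).1 := by
  have hsplit := Finset.sum_filter_add_sum_filter_not I (fun i => c ∈ (w i).2) (fun i => (w i).1)
  rw [appScore_add, appScore_add, appScore_map_of_forall_mem hp, appScore_map, ← hsplit]
  omega

end

theorem stmt16_general {C : Type*} [DecidableEq C] (t nn : ℕ)
    (V : Multiset (ℕ × Finset C)) (p : C)
    (w : Fin nn → ℕ × Finset C)
    (hw : ∀ i, p ∈ (w i).2 ∧ (w i).2.card = t)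
    (I : Finset (Fin nn)) :
    (∀ c, appScore (V + I.val.map w) c ≤ appScore (V + I.val.map w) p) ↔
    (∀ c, c ≠ p →
      appScore V c - appScore V p ≤
        ∑ i ∈ I.filter (fun i => c ∉ (w i).2), (w i).1) := by
  have hp : ∀ i ∈ I, p ∈ (w i).2 := fun i _ => (hw i).1
  refine forall_congr' fun c => ?_
  by_cases hc : c = p
  · subst hc
    simp only [le_refl, ne_eq, not_true_eq_false, IsEmpty.forall_iff]
  · simp only [appScore_add_le_iff hp, ne_eq, hc, not_false_eq_true, forall_const]

/-- Equivalence of `t`-approval WCCAV and weighted multicover. With covering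
requirements `r_c = max(0, score_V(c) − score_V(p))` and, for each unregistered voter
`w_i` (approving `p` and `t−1` others), the set `S_{w_i}` of candidates `w_i` does not
approve, weighted `ω(w_i)`: for any index set `I`, adding the voters `{w_i : i ∈ I}` makes
`p` a winner iff for every `c ≠ p`, `Σ_{i ∈ I, c ∈ S_{w_i}} ω(w_i) ≥ r_c`. -/
theorem stmt16 {C : Type*} [Fintype C] [DecidableEq C] (t nn : ℕ)
    (V : Multiset (ℕ × Finset C)) (p : C)
    (w : Fin nn → ℕ × Finset C)
    (hw : ∀ i, p ∈ (w i).2 ∧ (w i).2.card = t)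
    (I : Finset (Fin nn)) :
    (∀ c, appScore (V + I.val.map w) c ≤ appScore (V + I.val.map w) p) ↔
    (∀ c, c ≠ p →
      appScore V c - appScore V p ≤
        ∑ i ∈ I.filter (fun i => c ∉ (w i).2), (w i).1) :=
  stmt16_general t nn V p w hw I
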